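/- Let P be a finite poset such that the set of elements with crossing number one forms a nonempty saturated chain c_1 < ... < c_k and all other elements have crossing number zero. Then P is an X-orchid: c_k is covered by exactly two elements, c_1 covers exactly two elements, every X-shaped subposet has some c_i as its center, and the center of any X-shaped subposet may be replaced by any other c_j to yield another X-shaped subposet of P. -/

import Mathlib

open Classical

variable {α : Type*}

/-- A saturated chain from `v` up to a maximal element: a list `v = v₀ ⋖ v₁ ⋖ … ⋖ vₖ`
with `vₖ` maximal. -/
def UpChain [PartialOrder α] (v : α) (l : List α) : Prop :=
  l.Chain' (· ⋖ ·) ∧ l.head? = some v ∧ ∃ m, l.getLast? = some m ∧ IsMax m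

/-- A saturated chain from a minimal element up to `v`. -/
def DownChain [PartialOrder α] (v : α) (l : List α) : Prop :=
  l.Chain' (· ⋖ ·) ∧ (∃ m, l.head? = some m ∧ IsMin m) ∧ l.getLast? = some v

/-- `uc v` : the number of saturated chains from `v` up to a maximal element. -/
noncomputable def uc [PartialOrder α] (v : α) : ℕ := Nat.card {l : List α // UpChain v l}

/-- `dc v` : the number of saturated chains from `v` down to a minimal element. -/
noncomputable def dc [PartialOrder α] (v : α) : ℕ := Nat.card {l : List α // DownChain v l}

/-- A maximal chain: a saturated chain from a minimal element to a maximal element. -/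
def IsMaxChainList [PartialOrder α] (l : List α) : Prop :=
  l.Chain' (· ⋖ ·) ∧ (∃ m, l.head? = some m ∧ IsMin m) ∧ ∃ m, l.getLast? = some m ∧ IsMax m

/-- `c(P)`: the number of maximal chains. -/
noncomputable def numMaxChains (α : Type*) [PartialOrder α] : ℕ :=
  Nat.card {l : List α // IsMaxChainList l}

/-- `max(P)`: the number of maximal elements. -/
noncomputable def numMax (α : Type*) [PartialOrder α] : ℕ := Nat.card {v : α // IsMax v}

/-- `min(P)`: the number of minimal elements. -/
noncomputable def numMin (α : Type*) [PartialOrder α] : ℕ := Nat.card {v : α // IsMin v}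

/-- `edges(P)`: the number of cover relations (edges of the Hasse diagram). -/
noncomputable def numEdges (α : Type*) [PartialOrder α] : ℕ :=
  Nat.card {p : α × α // p.1 ⋖ p.2}

/-- `gap(P) = c(P) + |P| - (max(P) + min(P) + edges(P))`. -/
noncomputable def gap (α : Type*) [PartialOrder α] : ℤ :=
  (numMaxChains α : ℤ) + Nat.card α - ((numMax α : ℤ) + numMin α + numEdges α)

/-- The crossing number `(uc(v)-1)(dc(v)-1)` of `v`. -/
noncomputable def crossingNumber [PartialOrder α] (v : α) : ℕ := (uc v - 1) * (dc v - 1)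

/-- `c` is the center of an X-shaped subposet: there are `a, b < c < d, e`
with `a ∥ b` and `d ∥ e`. -/
def IsXCenter [PartialOrder α] (c : α) : Prop :=
  ∃ a b d e : α, a < c ∧ b < c ∧ c < d ∧ c < e ∧
    ¬ a ≤ b ∧ ¬ b ≤ a ∧ ¬ d ≤ e ∧ ¬ e ≤ d

/-- `P` contains an X-shaped subposet. -/
def HasX (α : Type*) [PartialOrder α] : Prop := ∃ c : α, IsXCenter c

/-!
Saturated chains from `v` up to a maximal element split according to the upper cover they pass
through, so `uc v` is the sum of `uc u` over the upper covers `u` of `v`, and dually for `dc`.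
Hence, if `v ⋖ w` and `uc w = uc v`, then `w` is the only upper cover of `v`: everything above
`v` lies above `w`, and the top legs `d, e` of an X centred at `v` stay incomparable above `w`.
On the chain `c₁ ⋖ ⋯ ⋖ cₖ` all `uc` and `dc` equal `2`, so X centers slide along it in both
directions. An X center has two up-chains (through `d` and through `e`) and two down-chains, so
crossing number at least one, and therefore lies on the chain. Finally, `uc cₖ = 2` bounds the
number of upper covers of `cₖ` by two, and a single upper cover `w` would have `uc w = 2` and
`dc w ≥ 2`, so `w` would lie on the chain above `cₖ`; the bottom `c₁` is the dual case.
-/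

open OrderDual

theorem List.IsChain.iff_of_mem {P : α → Prop} {l : List α} {x y : α}
    (h : l.IsChain fun a b => P a ↔ P b) (hx : x ∈ l) (hy : y ∈ l) : P x ↔ P y := by
  cases l with
  | nil => simp at hx
  | cons a t =>
    have key := h.induction (fun c => P c ↔ P a) _ (fun _ _ hxy hx => hxy.symm.trans hx)
      fun _ => Iff.rfl
    exact (key x hx).trans (key y hy).symm

section PartialOrder

variable [PartialOrder α] {u v x y : α} {l : List α}

theorem List.IsChain.le_or_le_of_mem (h : l.IsChain (· ≤ ·)) (hx : x ∈ l) (hy : y ∈ l) :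
    x ≤ y ∨ y ≤ x :=
  have : Std.Symm fun a b : α => a ≤ b ∨ b ≤ a := ⟨fun _ _ => Or.symm⟩
  (List.isChain_iff_pairwise.mp h |>.imp Or.inl).forall_of_forall
    (R := fun a b : α => a ≤ b ∨ b ≤ a) (fun _ _ => .inl le_rfl) hx hy

theorem List.IsChain.head_le_of_mem (h : l.IsChain (· ≤ ·)) (hne : l ≠ []) (hx : x ∈ l) :
    l.head hne ≤ x :=
  h.induction (l.head hne ≤ ·) l (fun _ _ hab h => h.trans hab) (fun _ => le_rfl) x hx

theorem List.IsChain.le_getLast_of_mem (h : l.IsChain (· ≤ ·)) (hne : l ≠ []) (hx : x ∈ l) :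
    x ≤ l.getLast hne :=
  h.backwards_induction (· ≤ l.getLast hne) l (fun _ _ hab h => hab.trans h) (fun _ => le_rfl)
    x hx

theorem UpChain.cons (hvu : v ⋖ u) (h : UpChain u l) : UpChain v (v :: l) := by
  obtain ⟨hc, hh, m, hlast, hm⟩ := h
  obtain ⟨t, rfl⟩ : ∃ t, l = u :: t := by
    cases l with
    | nil => simp at hh
    | cons a t => exact ⟨t, by simp_all⟩
  exact ⟨hc.cons_cons hvu, rfl, m, by simpa using hlast, hm⟩

theorem upChain_singleton (hv : IsMax v) : UpChain v [v] :=
  ⟨List.isChain_singleton v, rfl, v, rfl, hv⟩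

theorem UpChain.eq_singleton (hv : IsMax v) (h : UpChain v l) : l = [v] := by
  obtain ⟨hc, hh, -⟩ := h
  match l, hc, hh with
  | [_], _, rfl => rfl
  | _ :: b :: _, hc, rfl => exact absurd (List.isChain_cons_cons.mp hc).1.lt hv.not_lt

theorem UpChain.exists_eq_cons (hv : ¬ IsMax v) (h : UpChain v l) :
    ∃ u t, v ⋖ u ∧ UpChain u t ∧ l = v :: t := by
  obtain ⟨hc, hh, m, hlast, hm⟩ := h
  match l, hc, hh, hlast with
  | [_], _, rfl, hlast =>
    obtain rfl : _ = m := by simpa using hlast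
    exact absurd hm hv
  | _ :: b :: t, hc, rfl, hlast =>
    obtain ⟨hvb, hc⟩ := List.isChain_cons_cons.mp hc
    exact ⟨b, b :: t, hvb, ⟨hc, rfl, m, by simpa using hlast, hm⟩, rfl⟩

theorem uc_eq_one_of_isMax (hv : IsMax v) : uc v = 1 :=
  Nat.card_eq_one_iff_exists.2
    ⟨⟨[v], upChain_singleton hv⟩, fun ⟨_, hl⟩ => Subtype.ext (hl.eq_singleton hv)⟩

theorem upChain_toDual_iff : UpChain (toDual v) (l.reverse.map toDual) ↔ DownChain v l := by
  have hchain : (l.reverse.map toDual).IsChain (· ⋖ ·) ↔ l.IsChain (· ⋖ ·) := by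
    simp [List.isChain_map, List.isChain_reverse, toDual_covBy_toDual_iff]
  have hhead : (l.reverse.map toDual).head? = some (toDual v) ↔ l.getLast? = some v := by
    simp [List.head?_reverse]
  have hlast : (∃ m, (l.reverse.map toDual).getLast? = some m ∧ IsMax m) ↔
      ∃ m, l.head? = some m ∧ IsMin m := by
    simp [List.getLast?_reverse]
  exact ⟨fun ⟨h₁, h₂, h₃⟩ => ⟨hchain.1 h₁, hlast.1 h₃, hhead.1 h₂⟩,
    fun ⟨h₁, h₂, h₃⟩ => ⟨hchain.2 h₁, hhead.2 h₃, hlast.2 h₂⟩⟩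

theorem uc_toDual (v : α) : uc (toDual v) = dc v :=
  Nat.card_congr <| .symm <| (List.reverse_involutive.toPerm _).trans
    (Equiv.listEquivOfEquiv toDual) |>.subtypeEquiv fun _ => upChain_toDual_iff.symm

theorem dc_toDual (v : α) : dc (toDual v) = uc v :=
  (uc_toDual (toDual v : αᵒᵈ)).symm

theorem crossingNumber_toDual (v : α) : crossingNumber (toDual v) = crossingNumber v := by
  rw [crossingNumber, crossingNumber, uc_toDual, dc_toDual, mul_comm]

theorem crossingNumber_eq_one_iff : crossingNumber v = 1 ↔ uc v = 2 ∧ dc v = 2 := by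
  rw [crossingNumber, mul_eq_one]
  omega

theorem isXCenter_toDual_iff : IsXCenter (toDual v) ↔ IsXCenter v :=
  ⟨fun ⟨a, b, d, e, ha, hb, hd, he, hab, hba, hde, hed⟩ =>
      ⟨d, e, a, b, hd, he, ha, hb, hed, hde, hba, hab⟩,
    fun ⟨a, b, d, e, ha, hb, hd, he, hab, hba, hde, hed⟩ =>
      ⟨d, e, a, b, hd, he, ha, hb, hed, hde, hba, hab⟩⟩

end PartialOrder

section Finite

variable [PartialOrder α] [Finite α] {u v w x y : α}

theorem finite_setOf_isChain_covBy : {l : List α | l.IsChain (· ⋖ ·)}.Finite :=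
  (List.finite_length_le α (Nat.card α)).subset fun _ hl =>
    List.Nodup.length_le_natCard <|
      (List.isChain_iff_pairwise.mp (hl.imp fun _ _ h => h.lt)).imp ne_of_lt

instance (v : α) : Finite {l // UpChain v l} :=
  (finite_setOf_isChain_covBy.subset fun _ hl => hl.1).to_subtype

instance (v : α) : Finite {l // DownChain v l} :=
  (finite_setOf_isChain_covBy.subset fun _ hl => hl.1).to_subtype

theorem exists_upChain_mem (hvw : v ≤ w) : ∃ l, UpChain v l ∧ w ∈ l := by
  induction v using WellFoundedGT.induction generalizing w with | _ v ih =>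
  rcases hvw.lt_or_eq with hlt | rfl
  · obtain ⟨u, hvu, huw⟩ := exists_covBy_le_of_lt hlt
    obtain ⟨l, hl, hw⟩ := ih u hvu.lt huw
    exact ⟨v :: l, hl.cons hvu, List.mem_cons_of_mem _ hw⟩
  · by_cases hv : IsMax v
    · exact ⟨[v], upChain_singleton hv, List.mem_singleton_self v⟩
    · obtain ⟨x, hx⟩ := not_isMax_iff.mp hv
      obtain ⟨u, hvu, -⟩ := exists_covBy_le_of_lt hx
      obtain ⟨l, hl, -⟩ := ih u hvu.lt le_rfl
      exact ⟨v :: l, hl.cons hvu, List.mem_cons_self⟩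

theorem uc_pos (v : α) : 0 < uc v :=
  have ⟨l, hl, _⟩ := exists_upChain_mem (le_refl v)
  Nat.card_pos_iff.2 ⟨⟨⟨l, hl⟩⟩, inferInstance⟩

theorem two_le_uc_of_not_le (hx : v ≤ x) (hy : v ≤ y) (hxy : ¬ x ≤ y) (hyx : ¬ y ≤ x) :
    2 ≤ uc v := by
  obtain ⟨l₁, h₁, hx₁⟩ := exists_upChain_mem hx
  obtain ⟨l₂, h₂, hy₂⟩ := exists_upChain_mem hy
  have hne : l₁ ≠ l₂ := by
    rintro rfl
    exact ((List.IsChain.imp (fun _ _ h => h.le) h₁.1).le_or_le_of_mem hx₁ hy₂).elim hxy hyx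
  exact Finite.one_lt_card_iff_nontrivial.2 ⟨⟨l₁, h₁⟩, ⟨l₂, h₂⟩, fun h => hne congr(($h).1)⟩

theorem IsXCenter.crossingNumber_pos (hv : IsXCenter v) : 0 < crossingNumber v := by
  obtain ⟨a, b, d, e, ha, hb, hd, he, hab, hba, hde, hed⟩ := hv
  have hu := two_le_uc_of_not_le hd.le he.le hde hed
  have hd := two_le_uc_of_not_le (v := toDual v) ha.le hb.le hba hab
  rw [uc_toDual] at hd
  exact Nat.mul_pos (by omega) (by omega)

theorem IsXCenter.of_covBy (hv : IsXCenter v) (hvw : v ⋖ w) (hw : ∀ u, v ⋖ u → u = w) :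
    IsXCenter w := by
  obtain ⟨a, b, d, e, ha, hb, hd, he, hab, hba, hde, hed⟩ := hv
  have hle : ∀ x, v < x → w ≤ x := fun x hx => by
    obtain ⟨u, hvu, hux⟩ := exists_covBy_le_of_lt hx
    exact hw u hvu ▸ hux
  refine ⟨a, b, d, e, ha.trans hvw.lt, hb.trans hvw.lt, (hle d hd).lt_of_ne ?_,
    (hle e he).lt_of_ne ?_, hab, hba, hde, hed⟩
  · rintro rfl; exact hde (hle e he)
  · rintro rfl; exact hed (hle d hd)

end Finite

section Fintype

variable [PartialOrder α] [Fintype α] {u v w : α}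

theorem uc_eq_sum_uc_covBy (hv : ¬ IsMax v) : uc v = ∑ u : {u // v ⋖ u}, uc (u : α) := by
  simp only [uc]
  rw [← Nat.card_sigma]
  symm
  refine Nat.card_eq_of_bijective (fun p => ⟨v :: p.2.1, p.2.2.cons p.1.2⟩) ⟨?_, ?_⟩
  · rintro ⟨⟨u₁, _⟩, l₁, h₁⟩ ⟨⟨u₂, _⟩, l₂, h₂⟩ h
    obtain rfl : l₁ = l₂ := by simpa using h
    obtain rfl : u₁ = u₂ := by simpa [h₂.2.1] using h₁.2.1.symm
    rfl
  · rintro ⟨l, hl⟩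
    obtain ⟨u, t, hvu, ht, rfl⟩ := hl.exists_eq_cons hv
    exact ⟨⟨⟨u, hvu⟩, t, ht⟩, rfl⟩

theorem uc_le_uc_of_covBy (hvu : v ⋖ u) : uc u ≤ uc v := by
  rw [uc_eq_sum_uc_covBy hvu.lt.not_isMax]
  exact Finset.single_le_sum (f := fun w : {w // v ⋖ w} => uc (w : α))
    (fun _ _ => Nat.zero_le _) (Finset.mem_univ ⟨u, hvu⟩)

theorem dc_le_dc_of_covBy (hvu : v ⋖ u) : dc v ≤ dc u := by
  rw [← uc_toDual, ← uc_toDual]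
  exact uc_le_uc_of_covBy hvu.toDual

theorem card_covBy_le_uc (v : α) : Nat.card {u // v ⋖ u} ≤ uc v := by
  by_cases hv : IsMax v
  · have : IsEmpty {u // v ⋖ u} := ⟨fun u => hv.not_lt u.2.lt⟩
    simp
  · rw [uc_eq_sum_uc_covBy hv, Nat.card_eq_fintype_card, Fintype.card_eq_sum_ones]
    exact Finset.sum_le_sum fun u _ => uc_pos (u : α)

theorem forall_covBy_eq_iff_uc_eq (hvw : v ⋖ w) : (∀ u, v ⋖ u → u = w) ↔ uc w = uc v := by
  rw [uc_eq_sum_uc_covBy hvw.lt.not_isMax]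
  refine ⟨fun h => ?_, fun h u hvu => ?_⟩
  · rw [Fintype.sum_eq_single ⟨w, hvw⟩ fun u hu => (hu (Subtype.ext (h u u.2))).elim]
  · by_contra huw
    have hpair := Finset.sum_le_sum_of_subset (f := fun u : {u // v ⋖ u} => uc (u : α))
      (Finset.subset_univ {⟨w, hvw⟩, ⟨u, hvu⟩})
    rw [Finset.sum_pair fun h => huw congr(($h).1).symm] at hpair
    dsimp only at hpair
    have := uc_pos u
    omega

theorem IsXCenter.of_covBy_of_uc_eq (hv : IsXCenter v) (hvw : v ⋖ w) (h : uc w = uc v) :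
    IsXCenter w :=
  hv.of_covBy hvw ((forall_covBy_eq_iff_uc_eq hvw).2 h)

theorem IsXCenter.of_covBy_of_dc_eq (hw : IsXCenter w) (hvw : v ⋖ w) (h : dc v = dc w) :
    IsXCenter v := by
  rw [← uc_toDual, ← uc_toDual] at h
  exact isXCenter_toDual_iff.1 ((isXCenter_toDual_iff.2 hw).of_covBy_of_uc_eq hvw.toDual h)

theorem isXCenter_iff_of_covBy (hvw : v ⋖ w) (hu : uc w = uc v) (hd : dc v = dc w) :
    IsXCenter v ↔ IsXCenter w :=
  ⟨fun hv => hv.of_covBy_of_uc_eq hvw hu, fun hw => hw.of_covBy_of_dc_eq hvw hd⟩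

theorem card_upperCovers_eq_two (hv : crossingNumber v = 1)
    (hcov : ∀ u, v ⋖ u → crossingNumber u = 0) : Nat.card {u // v ⋖ u} = 2 := by
  obtain ⟨hu, hd⟩ := crossingNumber_eq_one_iff.1 hv
  have hmax : ¬ IsMax v := fun h => by simp [uc_eq_one_of_isMax h] at hu
  obtain ⟨x, hx⟩ := not_isMax_iff.1 hmax
  obtain ⟨w, hvw, -⟩ := exists_covBy_le_of_lt hx
  -- a sole upper cover `w` would get `uc w = 2` and `dc w ≥ 2`, contradicting `hcov`
  obtain ⟨u, hvu, huw⟩ : ∃ u, v ⋖ u ∧ u ≠ w := by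
    by_contra! h
    have huw := (forall_covBy_eq_iff_uc_eq hvw).1 h
    have hdw := dc_le_dc_of_covBy hvw
    have := hcov w hvw
    rw [crossingNumber, huw, hu] at this
    omega
  have hle := card_covBy_le_uc v
  have hlt : 1 < Nat.card {u // v ⋖ u} :=
    Finite.one_lt_card_iff_nontrivial.2 ⟨⟨u, hvu⟩, ⟨w, hvw⟩, fun h => huw congr(($h).1)⟩
  omega

theorem card_lowerCovers_eq_two (hv : crossingNumber v = 1)
    (hcov : ∀ u, u ⋖ v → crossingNumber u = 0) : Nat.card {u // u ⋖ v} = 2 := by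
  rw [← card_upperCovers_eq_two (v := toDual v) (by rwa [crossingNumber_toDual])
    fun u hu => (crossingNumber_toDual (ofDual u)).trans (hcov _ (toDual_covBy_toDual_iff.1 hu))]
  exact Nat.card_congr (Equiv.subtypeEquiv toDual fun _ => toDual_covBy_toDual_iff.symm)

end Fintype

theorem crossing_chain_is_xOrchid (α : Type*) [Fintype α] [PartialOrder α] (l : List α) (hne : l ≠ [])
    (hchain : l.Chain' (· ⋖ ·))
    (hone : ∀ v ∈ l, crossingNumber v = 1)
    (hzero : ∀ v : α, v ∉ l → crossingNumber v = 0) :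
    Nat.card {u : α // l.getLast hne ⋖ u} = 2 ∧
    Nat.card {d : α // d ⋖ l.head hne} = 2 ∧
    (∀ c : α, IsXCenter c → c ∈ l) ∧
    (∀ c ∈ l, ∀ c' ∈ l, IsXCenter c → IsXCenter c') := by
  have hle : l.IsChain (· ≤ ·) := List.IsChain.imp (fun _ _ h => h.le) hchain
  refine ⟨card_upperCovers_eq_two (hone _ (List.getLast_mem hne)) fun u hu => hzero u fun hul =>
      (hle.le_getLast_of_mem hne hul).not_gt hu.lt,
    card_lowerCovers_eq_two (hone _ (List.head_mem hne)) fun u hu => hzero u fun hul =>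
      (hle.head_le_of_mem hne hul).not_gt hu.lt,
    fun c hc => ?_, fun c hc c' hc' hX => ?_⟩
  · by_contra hcl
    exact hc.crossingNumber_pos.ne' (hzero c hcl)
  · have hstep : l.IsChain fun p q => IsXCenter p ↔ IsXCenter q :=
      List.IsChain.imp_of_mem_imp (fun p q hp hq hpq => by
        obtain ⟨hup, hdp⟩ := crossingNumber_eq_one_iff.1 (hone p hp)
        obtain ⟨huq, hdq⟩ := crossingNumber_eq_one_iff.1 (hone q hq)
        exact isXCenter_iff_of_covBy hpq (huq.trans hup.symm) (hdp.trans hdq.symm)) hchain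
    exact (hstep.iff_of_mem hc hc').1 hX
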